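/- arXiv:1302.6927 — 5 statements merged into one kernel-verified Lean document; each statement's English description precedes it below -/
import Mathlib

section
/- (Lemma 1.) Let k,q ≥ 1, m ≥ 1, T ≥ 1, let (X_t) be any real sequence (with X_τ = 0 for τ ≤ 0), let ℓ_t : ℝ × ℝ → ℝ be arbitrary loss functions, and let (α,β) ∈ ℝ^k × ℝ^q be any coefficient vectors. Then inf_{γ ∈ ℝ^{m+k}} Σ_{t=1}^T ℓ_t^m(γ) ≤ Σ_{t=1}^T f_t^m(α,β). -/
open Finset

/-- `F` is representable as a fixed linear combination of the `N` previous values of `X`. -/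
def RepAux (X : ℤ → ℝ) (N : ℕ) (F : ℤ → ℝ) : Prop :=
  ∃ c : ℕ → ℝ, ∀ t : ℤ, F t = ∑ j ∈ Finset.range N, c j * X (t - ((j : ℤ) + 1))

lemma repAux_congr {X : ℤ → ℝ} {N : ℕ} {F G : ℤ → ℝ} (h : ∀ t, F t = G t)
    (hF : RepAux X N F) : RepAux X N G := by
  obtain ⟨c, hc⟩ := hF
  exact ⟨c, fun t => (h t) ▸ hc t⟩

lemma repAux_zero (X : ℤ → ℝ) (N : ℕ) : RepAux X N (fun _ => 0) :=
  ⟨fun _ => 0, fun t => by simp⟩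

lemma repAux_mono {X : ℤ → ℝ} {N N' : ℕ} (h : N ≤ N') {F : ℤ → ℝ}
    (hF : RepAux X N F) : RepAux X N' F := by
  obtain ⟨c, hc⟩ := hF
  refine ⟨fun j => if j < N then c j else 0, fun t => ?_⟩
  show F t = ∑ j ∈ Finset.range N', (if j < N then c j else 0) * X (t - ((j : ℤ) + 1))
  rw [hc t]
  rw [← Finset.sum_subset (Finset.range_subset_range.2 h)]
  · apply Finset.sum_congr rfl
    intro j hj
    simp [Finset.mem_range.1 hj]
  · intro j _ hj
    have : ¬ j < N := fun h' => hj (Finset.mem_range.2 h')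
    simp [this]

lemma repAux_add {X : ℤ → ℝ} {N : ℕ} {F G : ℤ → ℝ}
    (hF : RepAux X N F) (hG : RepAux X N G) : RepAux X N (fun t => F t + G t) := by
  obtain ⟨c, hc⟩ := hF; obtain ⟨d, hd⟩ := hG
  exact ⟨fun j => c j + d j, fun t => by
    simp only [hc t, hd t, add_mul, Finset.sum_add_distrib]⟩

lemma repAux_smul {X : ℤ → ℝ} {N : ℕ} (a : ℝ) {F : ℤ → ℝ}
    (hF : RepAux X N F) : RepAux X N (fun t => a * F t) := by
  obtain ⟨c, hc⟩ := hF
  refine ⟨fun j => a * c j, fun t => ?_⟩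
  show a * F t = ∑ j ∈ Finset.range N, (a * c j) * X (t - ((j : ℤ) + 1))
  rw [hc t, Finset.mul_sum]
  simp [mul_assoc]

lemma repAux_sub {X : ℤ → ℝ} {N : ℕ} {F G : ℤ → ℝ}
    (hF : RepAux X N F) (hG : RepAux X N G) : RepAux X N (fun t => F t - G t) := by
  have := repAux_add hF (repAux_smul (-1) hG)
  exact repAux_congr (fun t => by ring) this

lemma repAux_sum {X : ℤ → ℝ} {N : ℕ} {ι : Type*} (s : Finset ι) (F : ι → ℤ → ℝ)
    (h : ∀ i ∈ s, RepAux X N (F i)) : RepAux X N (fun t => ∑ i ∈ s, F i t) := by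
  classical
  induction s using Finset.induction with
  | empty => exact repAux_congr (fun t => by simp) (repAux_zero X N)
  | @insert a s ha ih =>
    have h1 := h _ (Finset.mem_insert_self _ _)
    have h2 := ih fun i hi => h i (Finset.mem_insert_of_mem hi)
    exact repAux_congr (fun t => by rw [Finset.sum_insert ha]) (repAux_add h1 h2)

lemma repAux_X {X : ℤ → ℝ} {N : ℕ} (j : ℕ) (hj : j < N) :
    RepAux X N (fun t => X (t - ((j : ℤ) + 1))) := by
  refine ⟨fun j' => if j' = j then 1 else 0, fun t => ?_⟩
  rw [Finset.sum_eq_single j]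
  · simp
  · intro b _ hb; simp [hb]
  · intro hjm; exact absurd (Finset.mem_range.2 hj) hjm

lemma repAux_shift {X : ℤ → ℝ} {N : ℕ} {F : ℤ → ℝ} (s : ℕ)
    (hF : RepAux X N F) : RepAux X (N + s) (fun t => F (t - (s : ℤ))) := by
  obtain ⟨c, hc⟩ := hF
  refine ⟨fun j => if s ≤ j then c (j - s) else 0, fun t => ?_⟩
  show F (t - (s : ℤ)) = ∑ j ∈ Finset.range (N + s),
    (if s ≤ j then c (j - s) else 0) * X (t - ((j : ℤ) + 1))
  rw [hc]
  have h0 : ∑ j ∈ Finset.Ico 0 s, (if s ≤ j then c (j - s) else 0) * X (t - ((j : ℤ) + 1)) = 0 := by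
    apply Finset.sum_eq_zero
    intro j hj
    simp [Nat.not_le.2 (Finset.mem_Ico.1 hj).2]
  rw [Finset.range_eq_Ico (N + s),
    ← Finset.sum_Ico_consecutive _ (Nat.zero_le s) (Nat.le_add_left s N),
    h0, zero_add, Finset.sum_Ico_eq_sum_range]
  simp only [Nat.add_sub_cancel_left, Nat.add_sub_cancel]
  apply Finset.sum_congr rfl
  intro j _
  have h1 : s ≤ s + j := Nat.le_add_right s j
  simp only [h1, if_true, Nat.add_sub_cancel_left]
  congr 1
  push_cast
  ring

/-- **Lemma 1** of "Online Learning for Time Series Prediction":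
the best AR(m+k) predictor (improper learning) does at least as well as the
truncated ARMA predictor `X_t^m(α,β)` with any fixed coefficients `(α,β)`.
Here `Xm m' t` denotes `X_t^{m'}(α,β)`, given by its defining recurrence, and the
infimum over `γ ∈ ℝ^{m+k}` of `∑_t ℓ_t^m(γ)` being at most `∑_t f_t^m(α,β)` is
expressed by exhibiting a witness `γ`. -/
theorem lemma1_improper_learning_dominates
    (k q m T : ℕ) (hk : 1 ≤ k) (hq : 1 ≤ q) (hm : 1 ≤ m) (hT : 1 ≤ T)
    (X : ℤ → ℝ) (hX0 : ∀ τ : ℤ, τ ≤ 0 → X τ = 0)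
    (ℓ : ℤ → ℝ → ℝ → ℝ)
    (α : Fin k → ℝ) (β : Fin q → ℝ)
    (Xm : ℤ → ℤ → ℝ)
    (hXm0 : ∀ m' : ℤ, m' ≤ 0 → ∀ t : ℤ, Xm m' t = X t)
    (hXmrec : ∀ m' : ℤ, 1 ≤ m' → ∀ t : ℤ,
      Xm m' t = (∑ i : Fin k, α i * X (t - (((i : ℕ) : ℤ) + 1)))
        + ∑ i : Fin q, β i * (X (t - (((i : ℕ) : ℤ) + 1))
            - Xm (m' - (((i : ℕ) : ℤ) + 1)) (t - (((i : ℕ) : ℤ) + 1)))) :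
    ∃ γ : Fin (m + k) → ℝ,
      ∑ t ∈ Finset.Icc 1 T,
          ℓ (t : ℤ) (X (t : ℤ)) (∑ i : Fin (m + k), γ i * X ((t : ℤ) - (((i : ℕ) : ℤ) + 1)))
        ≤ ∑ t ∈ Finset.Icc 1 T, ℓ (t : ℤ) (X (t : ℤ)) (Xm (m : ℤ) (t : ℤ)) := by
  -- Key claim: `Xm (n+1)` is a fixed linear combination of `n + k` past values.
  have key : ∀ n : ℕ, RepAux X (n + k) (fun t => Xm ((n : ℤ) + 1) t) := by
    intro n
    induction n using Nat.strong_induction_on with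
    | _ n IH =>
      have hrec := hXmrec ((n : ℤ) + 1) (by omega)
      apply repAux_congr (G := fun t => Xm ((n : ℤ) + 1) t) (fun t => (hrec t).symm)
      apply repAux_add
      · -- α part
        apply repAux_sum
        intro i _
        apply repAux_smul
        exact repAux_X (X := X) (i : ℕ) (by omega)
      · -- β part
        apply repAux_sum
        intro i _
        apply repAux_smul
        by_cases hi : (i : ℕ) < n
        · -- genuine recursion
          apply repAux_sub
          · exact repAux_X (X := X) (i : ℕ) (by omega)
          · set d : ℕ := n - 1 - (i : ℕ) with hd
            have hdn : d < n := by omega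
            have hIH := IH d hdn
            have hcast : ((d : ℤ) + 1) = (n : ℤ) + 1 - (((i : ℕ) : ℤ) + 1) := by
              push_cast; omega
            have hshift := repAux_shift ((i : ℕ) + 1) hIH
            have : RepAux X (n + k)
                (fun t => Xm ((d : ℤ) + 1) (t - ((((i : ℕ) + 1 : ℕ)) : ℤ))) :=
              repAux_mono (by omega) hshift
            apply repAux_congr (hF := this)
            intro t
            rw [hcast]
            norm_cast
        · -- the MA term vanishes
          have h0 : (n : ℤ) + 1 - (((i : ℕ) : ℤ) + 1) ≤ 0 := by
            have : (n : ℤ) ≤ (i : ℕ) := by exact_mod_cast Nat.le_of_not_lt hi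
            omega
          apply repAux_congr (hF := repAux_zero X (n + k))
          intro t
          rw [hXm0 _ h0]
          try ring
  -- Instantiate at n = m - 1.
  obtain ⟨c, hc⟩ := key (m - 1)
  have hc' : ∀ t : ℤ, Xm (((m - 1 : ℕ) : ℤ) + 1) t
      = ∑ j ∈ Finset.range (m - 1 + k), c j * X (t - ((j : ℤ) + 1)) := hc
  have hmcast : (((m - 1 : ℕ) : ℤ) + 1) = (m : ℤ) := by
    have : ((m - 1 : ℕ) : ℤ) = (m : ℤ) - 1 := by push_cast [hm]; ring
    omega
  refine ⟨fun i => if (i : ℕ) < m - 1 + k then c i else 0, le_of_eq ?_⟩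
  apply Finset.sum_congr rfl
  intro t _
  congr 1
  rw [← hmcast, hc']
  rw [Fin.sum_univ_eq_sum_range
    (fun i => (if i < m - 1 + k then c i else 0) * X ((t : ℤ) - ((i : ℤ) + 1)))]
  rw [← Finset.sum_subset (Finset.range_subset_range.2 (by omega : m - 1 + k ≤ m + k))]
  · apply Finset.sum_congr rfl
    intro j hj
    simp [Finset.mem_range.1 hj]
  · intro j _ hj
    simp [Nat.not_lt.2 (Nat.le_of_not_lt fun h' => hj (Finset.mem_range.2 h'))]
end

section
/- (Linear representation of the truncated predictor.) Let k,q ≥ 1 and m ≥ 1, and let (α,β) ∈ ℝ^k × ℝ^q. Then there exists a coefficient vector c = c(α,β) ∈ ℝ^{m+k}, depending only on α, β, k, q and m (and not on the signal), such that for every real sequence (X_t) (with X_τ = 0 for τ ≤ 0) and every t ≥ 1, X_t^m(α,β) = Σ_{i=1}^{m+k} c_i X_{t−i}. -/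
open Finset

noncomputable def coefAux (k q : ℕ) (α : Fin k → ℝ) (β : Fin q → ℝ) : ℕ → ℤ → ℝ
  | n => fun j =>
    (if h : 1 ≤ j ∧ j ≤ (k:ℤ) then α ⟨(j-1).toNat, by omega⟩ else 0)
    + ∑ i : Fin q, β i *
        (if h2 : (i:ℕ)+2 ≤ n then
          ((if j = ((i:ℕ):ℤ)+1 then 1 else 0)
            - coefAux k q α β (n - ((i:ℕ)+1)) (j - (((i:ℕ):ℤ)+1)))
         else 0)
  termination_by n => n
  decreasing_by omega

lemma coefAux_eq (k q : ℕ) (α : Fin k → ℝ) (β : Fin q → ℝ) (n : ℕ) (j : ℤ) :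
    coefAux k q α β n j =
    (if h : 1 ≤ j ∧ j ≤ (k:ℤ) then α ⟨(j-1).toNat, by omega⟩ else 0)
    + ∑ i : Fin q, β i *
        (if h2 : (i:ℕ)+2 ≤ n then
          ((if j = ((i:ℕ):ℤ)+1 then 1 else 0)
            - coefAux k q α β (n - ((i:ℕ)+1)) (j - (((i:ℕ):ℤ)+1)))
         else 0) := by
  rw [coefAux]

lemma coefAux_support (k q : ℕ) (α : Fin k → ℝ) (β : Fin q → ℝ) :
    ∀ n : ℕ, ∀ j : ℤ, (j < 1 ∨ (n:ℤ) + k < j) → coefAux k q α β n j = 0 := by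
  intro n
  induction n using Nat.strong_induction_on with
  | _ n ih =>
    intro j hj
    rw [coefAux_eq]
    rw [dif_neg (by omega)]
    rw [zero_add]
    apply Finset.sum_eq_zero
    intro i _
    rcases le_or_gt ((i:ℕ)+2) n with h2 | h2
    · rw [dif_pos h2]
      rw [if_neg (by omega)]
      rw [ih (n - ((i:ℕ)+1)) (by omega) _ (by push_cast; omega)]
      ring
    · rw [dif_neg (by omega), mul_zero]

section Main
variable (k q : ℕ) (α : Fin k → ℝ) (β : Fin q → ℝ)
  (X : ℤ → ℝ) (hX : ∀ τ : ℤ, τ ≤ 0 → X τ = 0)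
  (Xm : ℤ → ℤ → ℝ)
  (hXm0 : ∀ m' : ℤ, m' ≤ 0 → ∀ t : ℤ, Xm m' t = X t)
  (hXmr : ∀ m' : ℤ, 1 ≤ m' → ∀ t : ℤ,
          Xm m' t = (∑ i : Fin k, α i * X (t - (((i : ℕ) : ℤ) + 1)))
            + ∑ i : Fin q, β i * (X (t - (((i : ℕ) : ℤ) + 1))
                - Xm (m' - (((i : ℕ) : ℤ) + 1)) (t - (((i : ℕ) : ℤ) + 1))))

include hX hXm0 hXmr in
lemma Xm_zero : ∀ n : ℕ, ∀ m' : ℤ, m' ≤ n → ∀ t : ℤ, t ≤ 0 → Xm m' t = 0 := by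
  intro n
  induction n with
  | zero => intro m' hm' t ht; rw [hXm0 m' (by exact_mod_cast hm'), hX t ht]
  | succ n ih =>
    intro m' hm' t ht
    rcases le_or_gt m' 0 with h | h
    · rw [hXm0 m' h, hX t ht]
    · rw [hXmr m' h]
      have h1 : ∀ i : Fin k, α i * X (t - (((i : ℕ) : ℤ) + 1)) = 0 := by
        intro i; rw [hX _ (by omega), mul_zero]
      have h2 : ∀ i : Fin q, β i * (X (t - (((i : ℕ) : ℤ) + 1))
          - Xm (m' - (((i : ℕ) : ℤ) + 1)) (t - (((i : ℕ) : ℤ) + 1))) = 0 := by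
        intro i
        rw [hX _ (by omega), ih (m' - (((i : ℕ) : ℤ) + 1)) (by push_cast at hm' ⊢; omega)
          _ (by omega)]
        ring
      rw [Finset.sum_congr rfl (fun i _ => h1 i), Finset.sum_congr rfl (fun i _ => h2 i)]
      simp

include hX hXm0 hXmr in
lemma Xm_repr : ∀ n : ℕ, ∀ t : ℤ,
    Xm ((n:ℤ)+1) t = ∑ j ∈ Icc (1:ℤ) ((n:ℤ)+1+k), coefAux k q α β (n+1) j * X (t - j) := by
  intro n
  induction n using Nat.strong_induction_on with
  | _ n ih =>
    intro t
    rw [hXmr _ (by omega)]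
    -- RHS manipulation
    rw [Finset.sum_congr rfl (fun j _ => by
      rw [coefAux_eq, add_mul, Finset.sum_mul] :
      ∀ j ∈ Icc (1:ℤ) ((n:ℤ)+1+k), coefAux k q α β (n+1) j * X (t - j) = _)]
    rw [Finset.sum_add_distrib]
    congr 1
    · -- alpha part
      rw [show ∑ j ∈ Icc (1:ℤ) ((n:ℤ)+1+k),
            (if h : 1 ≤ j ∧ j ≤ (k:ℤ) then α ⟨(j-1).toNat, by omega⟩ else 0) * X (t - j)
          = ∑ j ∈ Icc (1:ℤ) (k:ℤ),
            (if h : 1 ≤ j ∧ j ≤ (k:ℤ) then α ⟨(j-1).toNat, by omega⟩ else 0) * X (t - j) from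
        (Finset.sum_subset (by apply Finset.Icc_subset_Icc_right; omega)
          (by intro j hj hj'; simp only [mem_Icc] at hj hj'; rw [dif_neg (by omega), zero_mul])).symm]
      refine Finset.sum_bij' (i := fun (a : Fin k) _ => ((a:ℕ):ℤ)+1)
        (j := fun b hb => (⟨(b-1).toNat, by simp only [mem_Icc] at hb; omega⟩ : Fin k))
        (fun a _ => by
          show ((a:ℕ):ℤ)+1 ∈ Icc (1:ℤ) (k:ℤ)
          have := a.isLt; simp only [mem_Icc]; omega)
        (fun b hb => mem_univ _)
        (fun a _ => by ext; simp) (fun b hb => by simp only [mem_Icc] at hb; simp; omega)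
        (fun a _ => ?_)
      beta_reduce
      rw [dif_pos (by have := a.isLt; constructor <;> omega)]
      congr 2
      ext
      simp
    · -- beta part
      rw [Finset.sum_comm]
      apply Finset.sum_congr rfl
      intro i _
      rcases le_or_gt ((i:ℕ)+2) (n+1) with h2 | h2
      · -- active case
        set s : ℤ := ((i:ℕ):ℤ)+1 with hs
        set lvl : ℕ := n - ((i:ℕ)+1) with hlvl
        have hna : n + 1 - ((i:ℕ)+1) = lvl + 1 := by omega
        have hcast : ((n:ℤ)+1) - s = (lvl:ℤ) + 1 := by rw [hs, hlvl]; push_cast; omega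
        rw [Finset.sum_congr rfl (fun j _ => by
          rw [dif_pos h2, hna, mul_sub, sub_mul, mul_assoc] :
          ∀ j ∈ Icc (1:ℤ) ((n:ℤ)+1+k),
            β i * (if h2' : (i:ℕ)+2 ≤ n+1 then
              ((if j = s then 1 else 0) - coefAux k q α β ((n+1) - ((i:ℕ)+1)) (j - s))
             else 0) * X (t - j)
            = β i * ((if j = s then 1 else 0) * X (t - j))
              - β i * coefAux k q α β (lvl+1) (j - s) * X (t - j))]
        rw [Finset.sum_sub_distrib]
        have e1 : ∑ j ∈ Icc (1:ℤ) ((n:ℤ)+1+k), β i * ((if j = s then 1 else 0) * X (t - j))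
            = β i * X (t - s) := by
          rw [Finset.sum_congr rfl (fun j _ => by
            split_ifs with h <;> simp [h] :
            ∀ j ∈ Icc (1:ℤ) ((n:ℤ)+1+k), β i * ((if j = s then 1 else 0) * X (t - j))
              = if j = s then β i * X (t - j) else 0)]
          rw [Finset.sum_ite_eq' (Icc (1:ℤ) ((n:ℤ)+1+k)) s (fun j => β i * X (t - j))]
          rw [if_pos (by simp only [mem_Icc]; omega)]
        have e2 : ∑ j ∈ Icc (1:ℤ) ((n:ℤ)+1+k), β i * coefAux k q α β (lvl+1) (j - s) * X (t - j)
            = β i * Xm ((lvl:ℤ)+1) (t - s) := by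
          rw [ih lvl (by omega) (t - s)]
          rw [Finset.mul_sum]
          rw [← Finset.sum_subset (s₁ := Icc (s+1) ((n:ℤ)+1+k))
            (by apply Finset.Icc_subset_Icc_left; omega)
            (by intro j hj hj'
                simp only [mem_Icc] at hj hj'
                rw [coefAux_support k q α β (lvl+1) (j - s) (by left; omega), mul_zero, zero_mul])]
          have himg : Icc (s+1) ((n:ℤ)+1+k) = (Icc (1:ℤ) ((lvl:ℤ)+1+k)).image (· + s) := by
            rw [Finset.image_add_right_Icc]
            congr 1 <;> [skip; rw [hs, hlvl]] <;> push_cast <;> omega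
          rw [himg, Finset.sum_image (fun a _ b _ h => by omega)]
          apply Finset.sum_congr rfl
          intro j _
          rw [show j + s - s = j by ring, show t - (j + s) = t - s - j by ring]
          ring
        rw [e1, e2, hcast]
        ring
      · -- inactive: Xm (n+1-(i+1)) = X, difference 0; coef term 0
        have hle : ((n:ℤ)+1) - (((i:ℕ):ℤ)+1) ≤ 0 := by push_cast; omega
        rw [hXm0 _ hle]
        simp only [sub_self, mul_zero]
        symm; apply Finset.sum_eq_zero
        intro j _
        rw [dif_neg (by omega), mul_zero, zero_mul]
end Main

/-- **Linear representation of the truncated predictor**: the truncated ARMA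
predictor `X_t^m(α,β)` is a fixed linear combination `∑_{i=1}^{m+k} c_i X_{t−i}`
of the last `m+k` signals, with coefficients `c = c(α,β)` independent of the
signal. Here `Xm m' t` denotes `X_t^{m'}(α,β)`, given by its defining recurrence. -/
theorem truncated_predictor_linear_representation
    (k q m : ℕ) (hk : 1 ≤ k) (hq : 1 ≤ q) (hm : 1 ≤ m)
    (α : Fin k → ℝ) (β : Fin q → ℝ) :
    ∃ c : Fin (m + k) → ℝ,
      ∀ X : ℤ → ℝ, (∀ τ : ℤ, τ ≤ 0 → X τ = 0) →
      ∀ Xm : ℤ → ℤ → ℝ,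
        (∀ m' : ℤ, m' ≤ 0 → ∀ t : ℤ, Xm m' t = X t) →
        (∀ m' : ℤ, 1 ≤ m' → ∀ t : ℤ,
          Xm m' t = (∑ i : Fin k, α i * X (t - (((i : ℕ) : ℤ) + 1)))
            + ∑ i : Fin q, β i * (X (t - (((i : ℕ) : ℤ) + 1))
                - Xm (m' - (((i : ℕ) : ℤ) + 1)) (t - (((i : ℕ) : ℤ) + 1)))) →
        ∀ t : ℤ, 1 ≤ t →
          Xm (m : ℤ) t = ∑ i : Fin (m + k), c i * X (t - (((i : ℕ) : ℤ) + 1)) := by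
  refine ⟨fun i => coefAux k q α β m (((i:ℕ):ℤ)+1), ?_⟩
  intro X hX Xm hXm0 hXmr t ht
  have h := Xm_repr k q α β X hX Xm hXm0 hXmr (m-1) t
  have hn : m - 1 + 1 = m := by omega
  have hn' : ((m-1:ℕ):ℤ) + 1 = (m:ℤ) := by push_cast [hn]; omega
  rw [hn, hn'] at h
  rw [h]
  refine Finset.sum_bij'
    (i := fun b hb => (⟨(b-1).toNat, by simp only [mem_Icc] at hb; push_cast; omega⟩ : Fin (m+k)))
    (j := fun (a : Fin (m+k)) _ => ((a:ℕ):ℤ)+1)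
    (fun b hb => mem_univ _)
    (fun a _ => by
      show ((a:ℕ):ℤ)+1 ∈ Icc (1:ℤ) ((m:ℤ)+k)
      have := a.isLt; simp only [mem_Icc]; push_cast; omega)
    (fun b hb => by simp only [mem_Icc] at hb; simp; omega)
    (fun a _ => by ext; simp)
    (fun b hb => ?_)
  simp only [mem_Icc] at hb
  beta_reduce
  congr 2 <;> simp <;> omega
end

section
/- (Lemma 3, inductive decay bound.) Let k,q ≥ 1, let (X_t) be a real sequence generated by an ARMA(k,q) model with coefficients (α,β) and noise terms (ε_t), where Σ_{i=1}^q |β_i| ≤ 1−ε for some ε ∈ (0,1). Suppose |X_t − X_t^∞(α,β) − ε_t| ≤ ρ·(1−ε)^{t/q} for t = 1,…,q, for some ρ > 0. Then for every t ≥ 1, |X_t − X_t^∞(α,β) − ε_t| ≤ ρ·(1−ε)^{t/q}. (In particular, when the X_t and ε_t are random variables and the hypothesis holds for the expectations E[|X_t − X_t^∞(α,β) − ε_t|] for t = 1,…,q, the same bound holds in expectation for all t.) -/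
open Finset

/-- **Lemma 3 (inductive decay bound)**: if the signal is generated by an
ARMA(k,q) model with `∑_i |β_i| ≤ 1 − ε`, and `|X_t − X_t^∞(α,β) − ε_t| ≤ ρ·(1−ε)^{t/q}`
holds for `t = 1,…,q`, then the same bound holds for every `t ≥ 1`. -/
theorem lemma3_inductive_decay
    (k q : ℕ) (hk : 1 ≤ k) (hq : 1 ≤ q)
    (ε : ℝ) (hε0 : 0 < ε) (hε1 : ε < 1) (ρ : ℝ) (hρ : 0 < ρ)
    (X eps : ℤ → ℝ)
    (α : Fin k → ℝ) (β : Fin q → ℝ)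
    (hβ : ∑ i : Fin q, |β i| ≤ 1 - ε)
    -- zero conventions for nonpositive times
    (hX0 : ∀ τ : ℤ, τ ≤ 0 → X τ = 0) (heps0 : ∀ τ : ℤ, τ ≤ 0 → eps τ = 0)
    -- the signal is generated by the ARMA(k,q) model with coefficients (α,β)
    (hARMA : ∀ t : ℤ, 1 ≤ t →
      X t = (∑ i : Fin k, α i * X (t - (((i : ℕ) : ℤ) + 1)))
        + (∑ i : Fin q, β i * eps (t - (((i : ℕ) : ℤ) + 1))) + eps t)
    -- the fixed-point predictor X_t^∞(α,β)
    (Xinf : ℤ → ℝ)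
    (hXinf0 : ∀ τ : ℤ, τ ≤ 1 → Xinf τ = X τ)
    (hXinfrec : ∀ t : ℤ, 2 ≤ t →
      Xinf t = (∑ i : Fin k, α i * X (t - (((i : ℕ) : ℤ) + 1)))
        + ∑ i : Fin q, β i * (X (t - (((i : ℕ) : ℤ) + 1))
            - Xinf (t - (((i : ℕ) : ℤ) + 1))))
    -- the base-case bound for t = 1,…,q
    (hbase : ∀ t : ℤ, 1 ≤ t → t ≤ (q : ℤ) →
      |X t - Xinf t - eps t| ≤ ρ * (1 - ε) ^ ((t : ℝ) / (q : ℝ))) :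
    ∀ t : ℤ, 1 ≤ t → |X t - Xinf t - eps t| ≤ ρ * (1 - ε) ^ ((t : ℝ) / (q : ℝ)) := by
  have hb0 : (0:ℝ) < 1 - ε := by linarith
  have hb1 : (1:ℝ) - ε ≤ 1 := by linarith
  have hq' : (1:ℤ) ≤ (q:ℤ) := by exact_mod_cast hq
  have hqR : (0:ℝ) < (q:ℝ) := by exact_mod_cast hq
  have key : ∀ n : ℕ, ∀ t : ℤ, 1 ≤ t → t ≤ (n:ℤ) →
      |X t - Xinf t - eps t| ≤ ρ * (1 - ε) ^ ((t : ℝ) / (q : ℝ)) := by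
    intro n
    induction n using Nat.strong_induction_on with
    | _ n ih =>
      intro t ht1 htn
      by_cases hcase : t ≤ (q:ℤ)
      · exact hbase t ht1 hcase
      · push_neg at hcase
        have ht2 : 2 ≤ t := by omega
        have h1 := hARMA t ht1
        have h2 := hXinfrec t ht2
        have hD : X t - Xinf t - eps t
            = ∑ i : Fin q, β i * -(X (t - (((i : ℕ) : ℤ) + 1))
                - Xinf (t - (((i : ℕ) : ℤ) + 1)) - eps (t - (((i : ℕ) : ℤ) + 1))) := by
          rw [h1, h2]
          rw [show (∑ i : Fin k, α i * X (t - (((i : ℕ) : ℤ) + 1)))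
              + (∑ i : Fin q, β i * eps (t - (((i : ℕ) : ℤ) + 1))) + eps t
              - ((∑ i : Fin k, α i * X (t - (((i : ℕ) : ℤ) + 1)))
                + ∑ i : Fin q, β i * (X (t - (((i : ℕ) : ℤ) + 1))
                    - Xinf (t - (((i : ℕ) : ℤ) + 1)))) - eps t
              = (∑ i : Fin q, β i * eps (t - (((i : ℕ) : ℤ) + 1)))
              - ∑ i : Fin q, β i * (X (t - (((i : ℕ) : ℤ) + 1))
                    - Xinf (t - (((i : ℕ) : ℤ) + 1))) from by ring]
          rw [← Finset.sum_sub_distrib]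
          exact Finset.sum_congr rfl (fun i _ => by ring)
        set C : ℝ := ρ * (1 - ε) ^ (((t : ℝ) - (q:ℝ)) / (q : ℝ)) with hCdef
        have hCpos : 0 < C := by positivity
        have hC : ∀ i : Fin q,
            |X (t - (((i : ℕ) : ℤ) + 1)) - Xinf (t - (((i : ℕ) : ℤ) + 1))
              - eps (t - (((i : ℕ) : ℤ) + 1))| ≤ C := by
          intro i
          have hi : ((i : ℕ) : ℤ) ≤ (q:ℤ) - 1 := by
            have := i.isLt; omega
          set s : ℤ := t - (((i : ℕ) : ℤ) + 1) with hs
          have hs1 : 1 ≤ s := by omega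
          have hn2 : 2 ≤ n := by omega
          have hsn : s ≤ ((n-1 : ℕ) : ℤ) := by push_cast; omega
          have hb := ih (n-1) (by omega) s hs1 hsn
          refine hb.trans ?_
          have hexp : ((t : ℝ) - (q:ℝ)) / (q:ℝ) ≤ (s : ℝ) / (q:ℝ) := by
            gcongr
            have : t - (q:ℤ) ≤ s := by omega
            exact_mod_cast this
          have := Real.rpow_le_rpow_of_exponent_ge hb0 hb1 hexp
          exact mul_le_mul_of_nonneg_left this hρ.le
        calc |X t - Xinf t - eps t|
            = |∑ i : Fin q, β i * -(X (t - (((i : ℕ) : ℤ) + 1))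
                - Xinf (t - (((i : ℕ) : ℤ) + 1)) - eps (t - (((i : ℕ) : ℤ) + 1)))| := by
              rw [hD]
          _ ≤ ∑ i : Fin q, |β i * -(X (t - (((i : ℕ) : ℤ) + 1))
                - Xinf (t - (((i : ℕ) : ℤ) + 1)) - eps (t - (((i : ℕ) : ℤ) + 1)))| :=
              Finset.abs_sum_le_sum_abs _ _
          _ ≤ ∑ i : Fin q, |β i| * C := by
              refine Finset.sum_le_sum fun i _ => ?_
              rw [abs_mul]
              refine mul_le_mul_of_nonneg_left ?_ (abs_nonneg _)
              rw [abs_neg]; exact hC i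
          _ = (∑ i : Fin q, |β i|) * C := by rw [← Finset.sum_mul]
          _ ≤ (1 - ε) * C := mul_le_mul_of_nonneg_right hβ hCpos.le
          _ = ρ * (1 - ε) ^ ((t : ℝ) / (q : ℝ)) := by
              rw [hCdef]
              rw [show (1 - ε) * (ρ * (1 - ε) ^ (((t : ℝ) - (q:ℝ)) / (q : ℝ)))
                  = ρ * ((1 - ε) ^ (1:ℝ) * (1 - ε) ^ (((t : ℝ) - (q:ℝ)) / (q : ℝ)))
                  from by rw [Real.rpow_one]; ring]
              rw [← Real.rpow_add hb0]
              congr 1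
              field_simp
              ring_nf
  intro t ht1
  exact key t.toNat t ht1 (by omega)
end

section
/- (Lemma 3, summed bound.) Let k,q ≥ 1, let (X_t) be a sequence of real random variables generated by an ARMA(k,q) model with coefficients (α,β) and noise terms (ε_t), where Σ_{i=1}^q |β_i| ≤ 1−ε for some ε ∈ (0,1), suppose E[|X_t − X_t^∞(α,β) − ε_t|] ≤ ρ·(1−ε)^{t/q} for t = 1,…,q, and suppose each loss function ℓ_t is L-Lipschitz in its second argument. Then for every T ≥ 1, |Σ_{t=1}^T E[f_t^∞(α,β)] − Σ_{t=1}^T E[f_t(α,β)]| ≤ ρ·L·(1−ε)^{1/q} / (1 − (1−ε)^{1/q}); in particular this quantity is bounded by a constant independent of T. -/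
open Finset MeasureTheory

/-- **Lemma 3 (summed bound)**: for a signal generated by an ARMA(k,q) model
with `∑_i |β_i| ≤ 1 − ε` and exponentially decaying base error,
`|∑_{t=1}^T E[f_t^∞(α,β)] − ∑_{t=1}^T E[f_t(α,β)]| ≤ ρL(1−ε)^{1/q}/(1−(1−ε)^{1/q})`
for every `T ≥ 1`; in particular it is bounded by a constant independent of `T`. -/
theorem lemma3_summed_bound
    {Ω : Type*} [MeasurableSpace Ω] (μ : Measure Ω) [IsProbabilityMeasure μ]
    (k q : ℕ) (hk : 1 ≤ k) (hq : 1 ≤ q)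
    (ε : ℝ) (hε0 : 0 < ε) (hε1 : ε < 1) (ρ L : ℝ) (hρ : 0 < ρ)
    (X eps : ℤ → Ω → ℝ)
    (α : Fin k → ℝ) (β : Fin q → ℝ)
    (hβ : ∑ i : Fin q, |β i| ≤ 1 - ε)
    -- zero conventions for nonpositive times
    (hX0 : ∀ τ : ℤ, τ ≤ 0 → X τ = 0) (heps0 : ∀ τ : ℤ, τ ≤ 0 → eps τ = 0)
    -- the signal is generated by the ARMA(k,q) model with coefficients (α,β)
    (hARMA : ∀ t : ℤ, 1 ≤ t → ∀ ω,
      X t ω = (∑ i : Fin k, α i * X (t - (((i : ℕ) : ℤ) + 1)) ω)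
        + (∑ i : Fin q, β i * eps (t - (((i : ℕ) : ℤ) + 1)) ω) + eps t ω)
    -- the fixed-point predictor X_t^∞(α,β)
    (Xinf : ℤ → Ω → ℝ)
    (hXinf0 : ∀ τ : ℤ, τ ≤ 1 → Xinf τ = X τ)
    (hXinfrec : ∀ t : ℤ, 2 ≤ t → ∀ ω,
      Xinf t ω = (∑ i : Fin k, α i * X (t - (((i : ℕ) : ℤ) + 1)) ω)
        + ∑ i : Fin q, β i * (X (t - (((i : ℕ) : ℤ) + 1)) ω
            - Xinf (t - (((i : ℕ) : ℤ) + 1)) ω))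
    -- the loss functions, L-Lipschitz in the second argument
    (ℓ : ℤ → ℝ → ℝ → ℝ)
    (hLip : ∀ t : ℤ, ∀ x a b : ℝ, |ℓ t x a - ℓ t x b| ≤ L * |a - b|)
    -- all relevant expectations exist
    (hXint : ∀ t : ℤ, Integrable (X t) μ)
    (hepsint : ∀ t : ℤ, Integrable (eps t) μ)
    (hXinfint : ∀ t : ℤ, Integrable (Xinf t) μ)
    (hfinfint : ∀ t : ℤ, Integrable (fun ω => ℓ t (X t ω) (Xinf t ω)) μ)
    (hftint : ∀ t : ℤ, Integrable (fun ω =>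
      ℓ t (X t ω) ((∑ i : Fin k, α i * X (t - (((i : ℕ) : ℤ) + 1)) ω)
        + ∑ i : Fin q, β i * eps (t - (((i : ℕ) : ℤ) + 1)) ω)) μ)
    -- the base-case decay bound for t = 1,…,q
    (hbase : ∀ t : ℤ, 1 ≤ t → t ≤ (q : ℤ) →
      ∫ ω, |X t ω - Xinf t ω - eps t ω| ∂μ ≤ ρ * (1 - ε) ^ ((t : ℝ) / (q : ℝ)))
    (T : ℕ) (hT : 1 ≤ T) :
    |(∑ t ∈ Finset.Icc 1 T, ∫ ω, ℓ (t : ℤ) (X (t : ℤ) ω) (Xinf (t : ℤ) ω) ∂μ)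
        - ∑ t ∈ Finset.Icc 1 T, ∫ ω,
            ℓ (t : ℤ) (X (t : ℤ) ω) ((∑ i : Fin k, α i * X ((t : ℤ) - (((i : ℕ) : ℤ) + 1)) ω)
              + ∑ i : Fin q, β i * eps ((t : ℤ) - (((i : ℕ) : ℤ) + 1)) ω) ∂μ|
      ≤ ρ * L * (1 - ε) ^ ((1 : ℝ) / (q : ℝ)) / (1 - (1 - ε) ^ ((1 : ℝ) / (q : ℝ))) := by
  -- L ≥ 0
  have hL : 0 ≤ L := by
    have h := hLip 0 0 1 0
    have h0 : (0:ℝ) ≤ |ℓ 0 0 1 - ℓ 0 0 0| := abs_nonneg _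
    simpa using h0.trans h
  have h1ε : (0:ℝ) < 1 - ε := by linarith
  have hq0 : (0:ℝ) < (q:ℝ) := by exact_mod_cast hq
  set r : ℝ := (1 - ε) ^ ((1:ℝ)/(q:ℝ)) with hrdef
  have hr0 : 0 < r := Real.rpow_pos_of_pos h1ε _
  have hr1 : r < 1 := Real.rpow_lt_one h1ε.le (by linarith) (by positivity)
  -- r ^ q = 1 - ε
  have hrq : r ^ q = 1 - ε := by
    rw [hrdef, ← Real.rpow_natCast ((1 - ε) ^ ((1:ℝ)/(q:ℝ))) q, ← Real.rpow_mul h1ε.le]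
    rw [one_div, inv_mul_cancel₀ (ne_of_gt hq0), Real.rpow_one]
  have hrn : ∀ n : ℕ, (1 - ε) ^ ((n:ℝ)/(q:ℝ)) = r ^ n := by
    intro n
    rw [hrdef, ← Real.rpow_natCast ((1 - ε) ^ ((1:ℝ)/(q:ℝ))) n, ← Real.rpow_mul h1ε.le]
    congr 1
    field_simp
  -- the error process
  set Δ : ℤ → Ω → ℝ := fun t ω => X t ω - Xinf t ω - eps t ω with hΔdef
  have hΔint : ∀ t : ℤ, Integrable (fun ω => Δ t ω) μ := fun t =>
    ((hXint t).sub (hXinfint t)).sub (hepsint t)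
  -- recursion for Δ for t ≥ q + 1
  have hrec : ∀ t : ℤ, (q:ℤ) + 1 ≤ t → ∀ ω,
      Δ t ω = -∑ i : Fin q, β i * Δ (t - (((i:ℕ):ℤ) + 1)) ω := by
    intro t ht ω
    have ht1 : (1:ℤ) ≤ t := by
      have : (1:ℤ) ≤ (q:ℤ) := by exact_mod_cast hq
      linarith
    have ht2 : (2:ℤ) ≤ t := by
      have : (1:ℤ) ≤ (q:ℤ) := by exact_mod_cast hq
      linarith
    have hA := hARMA t ht1 ω
    have hB := hXinfrec t ht2 ω
    have hsum : (∑ i : Fin q, β i * eps (t - (((i:ℕ):ℤ) + 1)) ω)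
        - (∑ i : Fin q, β i * (X (t - (((i:ℕ):ℤ) + 1)) ω - Xinf (t - (((i:ℕ):ℤ) + 1)) ω))
        = -∑ i : Fin q, β i * Δ (t - (((i:ℕ):ℤ) + 1)) ω := by
      rw [← Finset.sum_sub_distrib, ← Finset.sum_neg_distrib]
      refine Finset.sum_congr rfl fun i _ => ?_
      simp only [hΔdef]
      ring
    simp only [hΔdef]
    rw [hA, hB]
    linarith [hsum]
  -- pointwise zero for nonpositive times
  have hΔ0 : ∀ s : ℤ, s ≤ 0 → ∀ ω, Δ s ω = 0 := by
    intro s hs ω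
    simp only [hΔdef, hXinf0 s (by linarith), hX0 s hs, heps0 s hs, Pi.zero_apply]
    ring
  -- key exponential bound
  have hkey : ∀ n : ℕ, 1 ≤ n → ∫ ω, |Δ (n:ℤ) ω| ∂μ ≤ ρ * r ^ n := by
    intro n
    induction n using Nat.strong_induction_on with
    | _ n IH =>
      intro hn1
      by_cases hnq : n ≤ q
      · have := hbase n (by exact_mod_cast hn1) (by exact_mod_cast hnq)
        rw [show (((n:ℤ):ℝ)) = ((n:ℕ):ℝ) by push_cast; ring, hrn n] at this
        simpa [hΔdef] using this
      · push_neg at hnq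
        have hnq' : q + 1 ≤ n := hnq
        have hqz : (q:ℤ) + 1 ≤ (n:ℤ) := by exact_mod_cast hnq'
        have heq : (fun ω => |Δ (n:ℤ) ω|)
            = fun ω => |∑ i : Fin q, β i * Δ ((n:ℤ) - (((i:ℕ):ℤ) + 1)) ω| := by
          funext ω
          rw [hrec (n:ℤ) hqz ω, abs_neg]
        -- bound each past term
        have hpast : ∀ i : Fin q, ∫ ω, |Δ ((n:ℤ) - (((i:ℕ):ℤ) + 1)) ω| ∂μ
            ≤ ρ * r ^ (n - q) := by
          intro i
          have hi1 : (i:ℕ) + 1 ≤ q := i.2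
          have hm : (n:ℤ) - (((i:ℕ):ℤ) + 1) = ((n - ((i:ℕ) + 1) : ℕ) : ℤ) := by
            have : (i:ℕ) + 1 ≤ n := le_trans hi1 (le_of_lt hnq)
            push_cast [Nat.cast_sub this]
            ring
          set m : ℕ := n - ((i:ℕ) + 1) with hmdef
          have hmlt : m < n := by omega
          have hm1 : 1 ≤ m := by omega
          have hmge : n - q ≤ m := by omega
          have h1 := IH m hmlt hm1
          have h2 : r ^ m ≤ r ^ (n - q) := pow_le_pow_of_le_one hr0.le hr1.le hmge
          rw [hm]
          calc ∫ ω, |Δ ((m:ℕ):ℤ) ω| ∂μ ≤ ρ * r ^ m := h1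
            _ ≤ ρ * r ^ (n - q) := by nlinarith [hρ.le]
        -- integral of the sum
        have hint_each : ∀ i : Fin q,
            Integrable (fun ω => |β i| * |Δ ((n:ℤ) - (((i:ℕ):ℤ) + 1)) ω|) μ := by
          intro i
          exact ((hΔint _).abs).const_mul _
        have hstep1 : ∫ ω, |Δ (n:ℤ) ω| ∂μ
            ≤ ∫ ω, ∑ i : Fin q, |β i| * |Δ ((n:ℤ) - (((i:ℕ):ℤ) + 1)) ω| ∂μ := by
          rw [heq]
          refine integral_mono ?_ ?_ ?_
          · have := (hΔint (n:ℤ)).abs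
            rwa [show (fun ω => |Δ (n:ℤ) ω|) = fun ω =>
              |∑ i : Fin q, β i * Δ ((n:ℤ) - (((i:ℕ):ℤ) + 1)) ω| from heq] at this
          · exact integrable_finset_sum _ fun i _ => hint_each i
          · intro ω
            calc |∑ i : Fin q, β i * Δ ((n:ℤ) - (((i:ℕ):ℤ) + 1)) ω|
                ≤ ∑ i : Fin q, |β i * Δ ((n:ℤ) - (((i:ℕ):ℤ) + 1)) ω| :=
                  Finset.abs_sum_le_sum_abs _ _
              _ = ∑ i : Fin q, |β i| * |Δ ((n:ℤ) - (((i:ℕ):ℤ) + 1)) ω| := by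
                  simp [abs_mul]
        have hstep2 : ∫ ω, ∑ i : Fin q, |β i| * |Δ ((n:ℤ) - (((i:ℕ):ℤ) + 1)) ω| ∂μ
            = ∑ i : Fin q, |β i| * ∫ ω, |Δ ((n:ℤ) - (((i:ℕ):ℤ) + 1)) ω| ∂μ := by
          rw [integral_finset_sum _ fun i _ => hint_each i]
          refine Finset.sum_congr rfl fun i _ => ?_
          exact integral_const_mul _ _
        have hstep3 : ∑ i : Fin q, |β i| * ∫ ω, |Δ ((n:ℤ) - (((i:ℕ):ℤ) + 1)) ω| ∂μ
            ≤ ∑ i : Fin q, |β i| * (ρ * r ^ (n - q)) := by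
          refine Finset.sum_le_sum fun i _ => ?_
          exact mul_le_mul_of_nonneg_left (hpast i) (abs_nonneg _)
        have hstep4 : ∑ i : Fin q, |β i| * (ρ * r ^ (n - q)) ≤ ρ * r ^ n := by
          rw [← Finset.sum_mul]
          have hpow : (1 - ε) * (ρ * r ^ (n - q)) = ρ * r ^ n := by
            rw [← hrq, ← mul_assoc, mul_comm (r ^ q) ρ, mul_assoc, ← pow_add]
            congr 2
            omega
          have hpos : 0 ≤ ρ * r ^ (n - q) := by positivity
          calc (∑ i : Fin q, |β i|) * (ρ * r ^ (n - q))
              ≤ (1 - ε) * (ρ * r ^ (n - q)) := mul_le_mul_of_nonneg_right hβ hpos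
            _ = ρ * r ^ n := hpow
        linarith [hstep1, hstep2 ▸ hstep3]
  -- per-term bound on the difference of expectations
  have hterm : ∀ t : ℕ, 1 ≤ t →
      |(∫ ω, ℓ (t:ℤ) (X (t:ℤ) ω) (Xinf (t:ℤ) ω) ∂μ)
        - ∫ ω, ℓ (t:ℤ) (X (t:ℤ) ω) ((∑ i : Fin k, α i * X ((t:ℤ) - (((i:ℕ):ℤ) + 1)) ω)
            + ∑ i : Fin q, β i * eps ((t:ℤ) - (((i:ℕ):ℤ) + 1)) ω) ∂μ|
      ≤ ρ * L * r ^ t := by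
    intro t ht1
    have ht1' : (1:ℤ) ≤ (t:ℤ) := by exact_mod_cast ht1
    set P : Ω → ℝ := fun ω => (∑ i : Fin k, α i * X ((t:ℤ) - (((i:ℕ):ℤ) + 1)) ω)
        + ∑ i : Fin q, β i * eps ((t:ℤ) - (((i:ℕ):ℤ) + 1)) ω with hPdef
    have hptwise : ∀ ω, |ℓ (t:ℤ) (X (t:ℤ) ω) (Xinf (t:ℤ) ω) - ℓ (t:ℤ) (X (t:ℤ) ω) (P ω)|
        ≤ L * |Δ (t:ℤ) ω| := by
      intro ω
      have h1 := hLip (t:ℤ) (X (t:ℤ) ω) (Xinf (t:ℤ) ω) (P ω)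
      have h2 : Xinf (t:ℤ) ω - P ω = -(Δ (t:ℤ) ω) := by
        have hA := hARMA (t:ℤ) ht1' ω
        simp only [hΔdef, hPdef]
        linarith [hA]
      rw [h2, abs_neg] at h1
      exact h1
    have hsub : (∫ ω, ℓ (t:ℤ) (X (t:ℤ) ω) (Xinf (t:ℤ) ω) ∂μ) - ∫ ω, ℓ (t:ℤ) (X (t:ℤ) ω) (P ω) ∂μ
        = ∫ ω, (ℓ (t:ℤ) (X (t:ℤ) ω) (Xinf (t:ℤ) ω) - ℓ (t:ℤ) (X (t:ℤ) ω) (P ω)) ∂μ :=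
      (integral_sub (hfinfint (t:ℤ)) (hftint (t:ℤ))).symm
    rw [hsub]
    calc |∫ ω, (ℓ (t:ℤ) (X (t:ℤ) ω) (Xinf (t:ℤ) ω) - ℓ (t:ℤ) (X (t:ℤ) ω) (P ω)) ∂μ|
        ≤ ∫ ω, |ℓ (t:ℤ) (X (t:ℤ) ω) (Xinf (t:ℤ) ω) - ℓ (t:ℤ) (X (t:ℤ) ω) (P ω)| ∂μ := by
          simpa [Real.norm_eq_abs] using
            norm_integral_le_integral_norm
              (fun ω => ℓ (t:ℤ) (X (t:ℤ) ω) (Xinf (t:ℤ) ω) - ℓ (t:ℤ) (X (t:ℤ) ω) (P ω)) (μ := μ)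
      _ ≤ ∫ ω, L * |Δ (t:ℤ) ω| ∂μ := by
          refine integral_mono ?_ ?_ hptwise
          · exact ((hfinfint (t:ℤ)).sub (hftint (t:ℤ))).abs
          · exact ((hΔint (t:ℤ)).abs).const_mul _
      _ = L * ∫ ω, |Δ (t:ℤ) ω| ∂μ := integral_const_mul _ _
      _ ≤ L * (ρ * r ^ t) := mul_le_mul_of_nonneg_left (hkey t ht1) hL
      _ = ρ * L * r ^ t := by ring
  -- sum up
  have hsumbound : |(∑ t ∈ Finset.Icc 1 T, ∫ ω, ℓ (t:ℤ) (X (t:ℤ) ω) (Xinf (t:ℤ) ω) ∂μ)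
        - ∑ t ∈ Finset.Icc 1 T, ∫ ω,
            ℓ (t:ℤ) (X (t:ℤ) ω) ((∑ i : Fin k, α i * X ((t:ℤ) - (((i:ℕ):ℤ) + 1)) ω)
              + ∑ i : Fin q, β i * eps ((t:ℤ) - (((i:ℕ):ℤ) + 1)) ω) ∂μ|
      ≤ ∑ t ∈ Finset.Icc 1 T, ρ * L * r ^ t := by
    rw [← Finset.sum_sub_distrib]
    refine (Finset.abs_sum_le_sum_abs _ _).trans ?_
    refine Finset.sum_le_sum fun t htmem => ?_
    exact hterm t (Finset.mem_Icc.mp htmem).1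
  have hgeom : ∑ t ∈ Finset.Icc 1 T, r ^ t ≤ r / (1 - r) := by
    have h1 : ∑ t ∈ Finset.Icc 1 T, r ^ t = ∑ i ∈ Finset.range T, r ^ (1 + i) := by
      rw [← Finset.Ico_add_one_right_eq_Icc, Finset.sum_Ico_eq_sum_range]
      simp
    have h2 : ∑ i ∈ Finset.range T, r ^ (1 + i) = r * ∑ i ∈ Finset.range T, r ^ i := by
      rw [Finset.mul_sum]
      refine Finset.sum_congr rfl fun i _ => ?_
      rw [pow_add, pow_one]
    have h3 : ∑ i ∈ Finset.range T, r ^ i ≤ (1 - r)⁻¹ := by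
      have := Summable.sum_le_tsum (Finset.range T) (fun i _ => by positivity)
        (summable_geometric_of_lt_one hr0.le hr1)
      rwa [tsum_geometric_of_lt_one hr0.le hr1] at this
    rw [h1, h2, div_eq_mul_inv]
    exact mul_le_mul_of_nonneg_left h3 hr0.le
  have hfinal : ∑ t ∈ Finset.Icc 1 T, ρ * L * r ^ t ≤ ρ * L * r / (1 - r) := by
    rw [← Finset.mul_sum]
    calc ρ * L * ∑ t ∈ Finset.Icc 1 T, r ^ t
        ≤ ρ * L * (r / (1 - r)) :=
          mul_le_mul_of_nonneg_left hgeom (mul_nonneg hρ.le hL)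
      _ = ρ * L * r / (1 - r) := by ring
  calc _ ≤ ∑ t ∈ Finset.Icc 1 T, ρ * L * r ^ t := hsumbound
    _ ≤ ρ * L * r / (1 - r) := hfinal
end

section
/- (Reduction theorem: from AR regret to ARMA regret.) Let k,q ≥ 1, m ≥ 1, T ≥ 1. Suppose the signal (X_t) is generated by an ARMA(k,q) model with coefficients (α′,β′) satisfying Σ_{i=1}^q |β′_i| ≤ 1−ε for some ε ∈ (0,1), the noise terms satisfy E[|ε_t|] ≤ M_max for all t, each loss function ℓ_t is L-Lipschitz in its second argument, and E[|X_t − X_t^∞(α′,β′) − ε_t|] ≤ ρ·(1−ε)^{t/q} for t = 1,…,q with ρ ≤ M_max. Let (γ^t)_{t=1}^T be any sequence of (possibly random) vectors in ℝ^{m+k} whose AR regret satisfies, pathwise, Σ_{t=1}^T ℓ_t^m(γ^t) − inf_{γ ∈ ℝ^{m+k}} Σ_{t=1}^T ℓ_t^m(γ) ≤ R for a constant R. Then E[Σ_{t=1}^T ℓ_t^m(γ^t)] − Σ_{t=1}^T E[f_t(α′,β′)] ≤ R + 2·T·L·M_max·(1−ε)^{m/q} + ρ·L·(1−ε)^{1/q}/(1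 − (1−ε)^{1/q}). -/
open Finset MeasureTheory

set_option linter.unusedVariables false
set_option maxHeartbeats 1000000



noncomputable def arCoef {k q : ℕ} (α : Fin k → ℝ) (β : Fin q → ℝ) : ℕ → ℕ → ℝ
  | ℓ, i =>
    (∑ r : Fin k, if i = (r : ℕ) + 1 then α r else 0)
    + (∑ r : Fin q, if i = (r : ℕ) + 1 ∧ (r : ℕ) + 1 ≤ ℓ then β r else 0)
    - ∑ r : Fin q, if h : (r : ℕ) + 1 ≤ ℓ then
        β r * arCoef α β (ℓ - ((r : ℕ) + 1)) (i - ((r : ℕ) + 1)) else 0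
  termination_by ℓ _ => ℓ
  decreasing_by exact Nat.sub_lt (by omega) (by omega)

lemma arCoef_zero {k q : ℕ} (α : Fin k → ℝ) (β : Fin q → ℝ) :
    ∀ ℓ i : ℕ, (i = 0 ∨ ℓ + k < i) → arCoef α β ℓ i = 0 := by
  intro ℓ
  induction ℓ using Nat.strong_induction_on with
  | _ ℓ ih =>
    intro i hi
    rw [arCoef]
    have h1 : (∑ r : Fin k, if i = (r : ℕ) + 1 then α r else 0) = 0 := by
      apply Finset.sum_eq_zero; intro r _
      rw [if_neg]; have := r.2; omega
    have h2 : (∑ r : Fin q, if i = (r : ℕ) + 1 ∧ (r : ℕ) + 1 ≤ ℓ then β r else 0) = 0 := by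
      apply Finset.sum_eq_zero; intro r _
      rw [if_neg]; omega
    have h3 : (∑ r : Fin q, if h : (r : ℕ) + 1 ≤ ℓ then
        β r * arCoef α β (ℓ - ((r : ℕ) + 1)) (i - ((r : ℕ) + 1)) else 0) = 0 := by
      apply Finset.sum_eq_zero; intro r _
      split
      · next h => rw [ih (ℓ - ((r : ℕ) + 1)) (by omega) _ (by omega), mul_zero]
      · rfl
    rw [h1, h2, h3]; ring

lemma sum_shift {k q : ℕ} (α : Fin k → ℝ) (β : Fin q → ℝ) {Ω : Type*} (X : ℤ → Ω → ℝ) (ω : Ω)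
    (ℓ n : ℕ) (hn : n + 1 ≤ ℓ) (t : ℤ) :
    ∑ i ∈ Icc 1 (ℓ + k), arCoef α β (ℓ - (n+1)) (i - (n+1)) * X (t - (i:ℤ)) ω
    = ∑ j ∈ Icc 1 (ℓ - (n+1) + k), arCoef α β (ℓ - (n+1)) j * X (t - ((n:ℤ)+1) - (j:ℤ)) ω := by
  rw [← Finset.sum_subset (Finset.Icc_subset_Icc (by omega : (1:ℕ) ≤ n+2) le_rfl)
    (by
      intro i hi hni
      simp only [Finset.mem_Icc] at hi hni
      rw [arCoef_zero α β _ (i - (n+1)) (Or.inl (by omega)), zero_mul])]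
  have hmap : Finset.Icc (n+2) (ℓ+k) =
      Finset.map (addRightEmbedding (n+1)) (Finset.Icc 1 (ℓ - (n+1) + k)) := by
    rw [Finset.map_add_right_Icc]
    congr 1 <;> omega
  rw [hmap, Finset.sum_map]
  apply Finset.sum_congr rfl
  intro j hj
  simp only [addRightEmbedding_apply]
  rw [Nat.add_sub_cancel]
  congr 1
  push_cast
  ring


lemma arSum_expand {k q : ℕ} (α : Fin k → ℝ) (β : Fin q → ℝ) {Ω : Type*} (X : ℤ → Ω → ℝ)
    (ℓ : ℕ) (t : ℤ) (ω : Ω) :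
    ∑ i ∈ Icc 1 (ℓ + k), arCoef α β ℓ i * X (t - (i:ℤ)) ω
    = (∑ r : Fin k, α r * X (t - (((r:ℕ):ℤ) + 1)) ω)
      + ∑ r : Fin q, (if (r:ℕ) + 1 ≤ ℓ then
          β r * (X (t - (((r:ℕ):ℤ)+1)) ω
            - ∑ j ∈ Icc 1 (ℓ - ((r:ℕ)+1) + k),
                arCoef α β (ℓ - ((r:ℕ)+1)) j * X (t - (((r:ℕ):ℤ)+1) - (j:ℤ)) ω)
        else 0) := by
  have hunf : ∀ i : ℕ, arCoef α β ℓ i =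
      (∑ r : Fin k, if i = (r : ℕ) + 1 then α r else 0)
      + (∑ r : Fin q, if i = (r : ℕ) + 1 ∧ (r : ℕ) + 1 ≤ ℓ then β r else 0)
      - ∑ r : Fin q, if h : (r : ℕ) + 1 ≤ ℓ then
          β r * arCoef α β (ℓ - ((r : ℕ) + 1)) (i - ((r : ℕ) + 1)) else 0 := by
    intro i; rw [arCoef]
  have step1 : ∑ i ∈ Icc 1 (ℓ + k), arCoef α β ℓ i * X (t - (i:ℤ)) ω
      = (∑ i ∈ Icc 1 (ℓ + k), ∑ r : Fin k,
            (if i = (r : ℕ) + 1 then α r * X (t - (i:ℤ)) ω else 0))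
        + (∑ i ∈ Icc 1 (ℓ + k), ∑ r : Fin q,
            (if i = (r : ℕ) + 1 ∧ (r : ℕ) + 1 ≤ ℓ then β r * X (t - (i:ℤ)) ω else 0))
        - ∑ i ∈ Icc 1 (ℓ + k), ∑ r : Fin q,
            (if (r : ℕ) + 1 ≤ ℓ then
              β r * arCoef α β (ℓ - ((r : ℕ) + 1)) (i - ((r : ℕ) + 1)) * X (t - (i:ℤ)) ω
             else 0) := by
    rw [← Finset.sum_add_distrib, ← Finset.sum_sub_distrib]
    apply Finset.sum_congr rfl
    intro i _
    rw [hunf i, sub_mul, add_mul, Finset.sum_mul, Finset.sum_mul, Finset.sum_mul]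
    congr 1
    · congr 1 <;> (apply Finset.sum_congr rfl; intro r _; split_ifs <;> simp)
    · apply Finset.sum_congr rfl; intro r _; split_ifs <;> simp [mul_assoc]
  rw [step1, Finset.sum_comm, Finset.sum_comm (s := Icc 1 (ℓ+k)) (t := Finset.univ (α := Fin q)),
    Finset.sum_comm (s := Icc 1 (ℓ+k)) (t := Finset.univ (α := Fin q))]
  have PA : ∀ r : Fin k,
      (∑ i ∈ Icc 1 (ℓ + k), if i = (r : ℕ) + 1 then α r * X (t - (i:ℤ)) ω else 0)
      = α r * X (t - (((r:ℕ):ℤ) + 1)) ω := by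
    intro r
    rw [Finset.sum_ite_eq' (Icc 1 (ℓ+k)) ((r:ℕ)+1) (fun i => α r * X (t - (i:ℤ)) ω),
      if_pos (by simp only [Finset.mem_Icc]; have := r.2; omega)]
    norm_num
  have PB : ∀ r : Fin q,
      (∑ i ∈ Icc 1 (ℓ + k), if i = (r : ℕ) + 1 ∧ (r : ℕ) + 1 ≤ ℓ then β r * X (t - (i:ℤ)) ω else 0)
      = (if (r:ℕ) + 1 ≤ ℓ then β r * X (t - (((r:ℕ):ℤ) + 1)) ω else 0) := by
    intro r
    by_cases hc : (r:ℕ) + 1 ≤ ℓ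
    · rw [if_pos hc]
      have : ∀ i ∈ Icc 1 (ℓ+k), (if i = (r : ℕ) + 1 ∧ (r : ℕ) + 1 ≤ ℓ then β r * X (t - (i:ℤ)) ω else 0)
          = (if i = (r : ℕ) + 1 then β r * X (t - (i:ℤ)) ω else 0) := by
        intro i _; split_ifs <;> tauto
      rw [Finset.sum_congr rfl this,
        Finset.sum_ite_eq' (Icc 1 (ℓ+k)) ((r:ℕ)+1) (fun i => β r * X (t - (i:ℤ)) ω),
        if_pos (by simp only [Finset.mem_Icc]; omega)]
      norm_num
    · rw [if_neg hc]
      apply Finset.sum_eq_zero; intro i _; rw [if_neg (by tauto)]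
  have PC : ∀ r : Fin q,
      (∑ i ∈ Icc 1 (ℓ + k), if (r : ℕ) + 1 ≤ ℓ then
          β r * arCoef α β (ℓ - ((r : ℕ) + 1)) (i - ((r : ℕ) + 1)) * X (t - (i:ℤ)) ω else 0)
      = (if (r:ℕ) + 1 ≤ ℓ then
          β r * ∑ j ∈ Icc 1 (ℓ - ((r:ℕ)+1) + k),
            arCoef α β (ℓ - ((r:ℕ)+1)) j * X (t - (((r:ℕ):ℤ)+1) - (j:ℤ)) ω else 0) := by
    intro r
    by_cases hc : (r:ℕ) + 1 ≤ ℓ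
    · rw [if_pos hc, ← sum_shift α β X ω ℓ (r:ℕ) hc t, Finset.mul_sum]
      apply Finset.sum_congr rfl; intro i _
      rw [if_pos hc]; ring
    · rw [if_neg hc]; apply Finset.sum_eq_zero; intro i _; rw [if_neg hc]
  rw [Finset.sum_congr rfl (fun r _ => PA r), Finset.sum_congr rfl (fun r _ => PB r),
    Finset.sum_congr rfl (fun r _ => PC r), add_sub_assoc, ← Finset.sum_sub_distrib]
  congr 1
  apply Finset.sum_congr rfl; intro r _
  split_ifs <;> ring


noncomputable def Gfun {k q : ℕ} (α : Fin k → ℝ) (β : Fin q → ℝ) {Ω : Type*}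
    (X eps : ℤ → Ω → ℝ) (ℓ : ℕ) (t : ℤ) (ω : Ω) : ℝ :=
  X t ω - eps t ω - ∑ i ∈ Icc 1 (ℓ + k), arCoef α β ℓ i * X (t - (i:ℤ)) ω

lemma key_bound {Ω : Type*} [MeasurableSpace Ω] (μ : Measure Ω) [IsProbabilityMeasure μ]
    (k q : ℕ) (hq : 1 ≤ q) (ε Mmax : ℝ) (hε0 : 0 < ε) (hε1 : ε < 1) (hM : 0 < Mmax)
    (X eps : ℤ → Ω → ℝ) (α : Fin k → ℝ) (β : Fin q → ℝ)
    (hβ : ∑ i : Fin q, |β i| ≤ 1 - ε)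
    (hX0 : ∀ τ : ℤ, τ ≤ 0 → X τ = 0) (heps0 : ∀ τ : ℤ, τ ≤ 0 → eps τ = 0)
    (hARMA : ∀ t : ℤ, 1 ≤ t → ∀ ω,
      X t ω = (∑ i : Fin k, α i * X (t - (((i : ℕ) : ℤ) + 1)) ω)
        + (∑ i : Fin q, β i * eps (t - (((i : ℕ) : ℤ) + 1)) ω) + eps t ω)
    (hepsbd : ∀ t : ℤ, 1 ≤ t → ∫ ω, |eps t ω| ∂μ ≤ Mmax)
    (hXint : ∀ t : ℤ, Integrable (X t) μ)
    (hepsint : ∀ t : ℤ, Integrable (eps t) μ) :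
    ∀ ℓ : ℕ, ∀ t : ℤ,
      ∫ ω, |Gfun α β X eps ℓ t ω| ∂μ ≤ Mmax * (1 - ε) ^ ((ℓ:ℝ)/(q:ℝ)) := by
  have hb0 : (0:ℝ) < 1 - ε := by linarith
  have hb1 : (1:ℝ) - ε ≤ 1 := by linarith
  have hGint : ∀ ℓ : ℕ, ∀ t : ℤ, Integrable (Gfun α β X eps ℓ t) μ := by
    intro ℓ t
    exact ((hXint t).sub (hepsint t)).sub
      (integrable_finset_sum _ (fun i _ => ((hXint _).const_mul _)))
  intro ℓ
  induction ℓ using Nat.strong_induction_on with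
  | _ ℓ ih =>
    intro t
    have hRHSpos : (0:ℝ) < Mmax * (1 - ε) ^ ((ℓ:ℝ)/(q:ℝ)) :=
      mul_pos hM (Real.rpow_pos_of_pos hb0 _)
    by_cases ht : 1 ≤ t
    case neg =>
      -- t ≤ 0 : everything vanishes
      have hz : ∀ ω, Gfun α β X eps ℓ t ω = 0 := by
        intro ω
        unfold Gfun
        rw [hX0 t (by omega), heps0 t (by omega)]
        have : ∀ i ∈ Icc 1 (ℓ + k), arCoef α β ℓ i * X (t - (i:ℤ)) ω = 0 := by
          intro i hi
          simp only [Finset.mem_Icc] at hi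
          rw [hX0 (t - (i:ℤ)) (by omega)]
          simp
        rw [Finset.sum_eq_zero this]
        simp
      have : (fun ω => |Gfun α β X eps ℓ t ω|) = fun _ => (0:ℝ) := by
        funext ω; rw [hz ω]; simp
      rw [this, integral_const]
      simpa using hRHSpos.le
    case pos =>
      -- pointwise recursion
      set s : Fin q → ℤ := fun r => t - (((r:ℕ):ℤ) + 1) with hs
      set F : Fin q → Ω → ℝ := fun r ω =>
        if (r:ℕ) + 1 ≤ ℓ then Gfun α β X eps (ℓ - ((r:ℕ)+1)) (s r) ω else -eps (s r) ω with hF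
      have hFint : ∀ r : Fin q, Integrable (F r) μ := by
        intro r
        simp only [hF]
        split_ifs
        · exact hGint _ _
        · exact (hepsint _).neg
      have hpt : ∀ ω, Gfun α β X eps ℓ t ω = -∑ r : Fin q, β r * F r ω := by
        intro ω
        unfold Gfun
        rw [arSum_expand α β X ℓ t ω, hARMA t ht ω]
        have hsum : ∑ r : Fin q, β r * F r ω
            = (∑ r : Fin q, (if (r:ℕ) + 1 ≤ ℓ then
                β r * (X (t - (((r:ℕ):ℤ)+1)) ω
                  - ∑ j ∈ Icc 1 (ℓ - ((r:ℕ)+1) + k),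
                      arCoef α β (ℓ - ((r:ℕ)+1)) j * X (t - (((r:ℕ):ℤ)+1) - (j:ℤ)) ω)
              else 0))
            - ∑ r : Fin q, β r * eps (t - (((r:ℕ):ℤ) + 1)) ω := by
          rw [← Finset.sum_sub_distrib]
          apply Finset.sum_congr rfl
          intro r _
          simp only [hF, hs]
          split_ifs with h
          · unfold Gfun; ring
          · ring
        rw [hsum]
        ring
      -- integral chain
      have habs : ∫ ω, |Gfun α β X eps ℓ t ω| ∂μ ≤ ∑ r : Fin q, |β r| * ∫ ω, |F r ω| ∂μ := by
        have h1 : ∫ ω, |Gfun α β X eps ℓ t ω| ∂μ = ∫ ω, |∑ r : Fin q, β r * F r ω| ∂μ := by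
          apply integral_congr_ae
          filter_upwards with ω
          rw [hpt ω, abs_neg]
        rw [h1]
        have h2 : ∫ ω, |∑ r : Fin q, β r * F r ω| ∂μ
            ≤ ∫ ω, ∑ r : Fin q, |β r| * |F r ω| ∂μ := by
          apply integral_mono
          · have : Integrable (fun ω => ∑ r : Fin q, β r * F r ω) μ :=
              integrable_finset_sum _ (fun r _ => (hFint r).const_mul _)
            exact this.abs
          · exact integrable_finset_sum _ (fun r _ => ((hFint r).abs.const_mul _))
          · intro ω
            calc |∑ r : Fin q, β r * F r ω| ≤ ∑ r : Fin q, |β r * F r ω| :=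
                  Finset.abs_sum_le_sum_abs _ _
              _ = ∑ r : Fin q, |β r| * |F r ω| := by
                  apply Finset.sum_congr rfl; intro r _; rw [abs_mul]
        refine h2.trans (le_of_eq ?_)
        rw [integral_finset_sum _ (fun r _ => ((hFint r).abs.const_mul _))]
        apply Finset.sum_congr rfl
        intro r _
        rw [integral_const_mul]
      have hFbd : ∀ r : Fin q,
          ∫ ω, |F r ω| ∂μ ≤ Mmax * (1 - ε) ^ (((ℓ:ℝ) - ((r:ℕ)+1))/(q:ℝ)) := by
        intro r
        simp only [hF]
        by_cases h : (r:ℕ) + 1 ≤ ℓ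
        · simp only [if_pos h]
          have := ih (ℓ - ((r:ℕ)+1)) (by omega) (s r)
          have hcast : (((ℓ - ((r:ℕ)+1) : ℕ)):ℝ) = (ℓ:ℝ) - ((r:ℕ)+1) := by
            push_cast [Nat.cast_sub h]; ring
          rwa [hcast] at this
        · simp only [if_neg h]
          have h1 : ∫ ω, |-eps (s r) ω| ∂μ ≤ Mmax := by
            simp only [abs_neg]
            by_cases hsr : 1 ≤ s r
            · exact hepsbd (s r) hsr
            · have : eps (s r) = 0 := heps0 (s r) (by omega)
              rw [this]
              simp [hM.le]
          refine h1.trans ?_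
          nth_rewrite 1 [← mul_one Mmax]
          apply mul_le_mul_of_nonneg_left _ hM.le
          apply Real.one_le_rpow_of_pos_of_le_one_of_nonpos hb0 hb1
          apply div_nonpos_of_nonpos_of_nonneg
          · have hle : (ℓ:ℝ) ≤ ((r:ℕ):ℝ) + 1 := by
              exact_mod_cast (by omega : ℓ ≤ (r:ℕ) + 1)
            linarith
          · positivity
      refine habs.trans ?_
      have hCpos : (0:ℝ) ≤ Mmax * (1 - ε) ^ ((ℓ:ℝ)/(q:ℝ)) := hRHSpos.le
      have per : ∀ r : Fin q, |β r| * ∫ ω, |F r ω| ∂μ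
          ≤ (Mmax * (1 - ε) ^ ((ℓ:ℝ)/(q:ℝ))) * (|β r| * (1 - ε)⁻¹) := by
        intro r
        have h1 : |β r| * ∫ ω, |F r ω| ∂μ
            ≤ |β r| * (Mmax * (1 - ε) ^ (((ℓ:ℝ) - ((r:ℕ)+1))/(q:ℝ))) :=
          mul_le_mul_of_nonneg_left (hFbd r) (abs_nonneg _)
        refine h1.trans ?_
        have hexp : (1 - ε) ^ (((ℓ:ℝ) - ((r:ℕ)+1))/(q:ℝ))
            = (1 - ε) ^ ((ℓ:ℝ)/(q:ℝ)) * (1 - ε) ^ (-(((r:ℕ):ℝ)+1)/(q:ℝ)) := by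
          rw [← Real.rpow_add hb0]; congr 1; ring
        have hmono : (1 - ε) ^ (-(((r:ℕ):ℝ)+1)/(q:ℝ)) ≤ (1 - ε)⁻¹ := by
          rw [← Real.rpow_neg_one (1 - ε)]
          apply Real.rpow_le_rpow_of_exponent_ge hb0 hb1
          rw [neg_div, neg_le_neg_iff, div_le_one (by positivity : (0:ℝ) < (q:ℝ))]
          exact_mod_cast (by have := r.2; omega : (r:ℕ) + 1 ≤ q)
        calc |β r| * (Mmax * (1 - ε) ^ (((ℓ:ℝ) - ((r:ℕ)+1))/(q:ℝ)))
            = (Mmax * (1 - ε) ^ ((ℓ:ℝ)/(q:ℝ))) * (|β r| * (1 - ε) ^ (-(((r:ℕ):ℝ)+1)/(q:ℝ))) := by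
              rw [hexp]; ring
          _ ≤ (Mmax * (1 - ε) ^ ((ℓ:ℝ)/(q:ℝ))) * (|β r| * (1 - ε)⁻¹) := by
              apply mul_le_mul_of_nonneg_left _ hCpos
              exact mul_le_mul_of_nonneg_left hmono (abs_nonneg _)
      calc ∑ r : Fin q, |β r| * ∫ ω, |F r ω| ∂μ
          ≤ ∑ r : Fin q, (Mmax * (1 - ε) ^ ((ℓ:ℝ)/(q:ℝ))) * (|β r| * (1 - ε)⁻¹) :=
            Finset.sum_le_sum (fun r _ => per r)
        _ = (Mmax * (1 - ε) ^ ((ℓ:ℝ)/(q:ℝ))) * ((∑ r : Fin q, |β r|) * (1 - ε)⁻¹) := by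
            rw [← Finset.mul_sum, ← Finset.sum_mul]
        _ ≤ (Mmax * (1 - ε) ^ ((ℓ:ℝ)/(q:ℝ))) * 1 := by
            apply mul_le_mul_of_nonneg_left _ hCpos
            have := mul_le_mul_of_nonneg_right hβ (inv_nonneg.mpr hb0.le)
            rwa [mul_inv_cancel₀ hb0.ne'] at this
        _ = Mmax * (1 - ε) ^ ((ℓ:ℝ)/(q:ℝ)) := mul_one _


/-- **Reduction theorem (from AR regret to ARMA regret)**: if an online sequence
`γ^1,…,γ^T` of AR(m+k) coefficient vectors has pathwise AR regret at most `R`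
(i.e. `∑_t ℓ_t^m(γ^t) ≤ ∑_t ℓ_t^m(γ) + R` for every comparator `γ ∈ ℝ^{m+k}`),
then its expected total loss exceeds that of the generating ARMA(k,q)
coefficients `(α′,β′)` by at most
`R + 2·T·L·M_max·(1−ε)^{m/q} + ρ·L·(1−ε)^{1/q}/(1−(1−ε)^{1/q})`. -/
theorem reduction_ar_to_arma
    {Ω : Type*} [MeasurableSpace Ω] (μ : Measure Ω) [IsProbabilityMeasure μ]
    (k q m T : ℕ) (hk : 1 ≤ k) (hq : 1 ≤ q) (hm : 1 ≤ m) (hT : 1 ≤ T)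
    (ε : ℝ) (hε0 : 0 < ε) (hε1 : ε < 1) (ρ L Mmax R : ℝ) (hρ0 : 0 < ρ) (hρ : ρ ≤ Mmax)
    (X eps : ℤ → Ω → ℝ)
    (α' : Fin k → ℝ) (β' : Fin q → ℝ)
    (hβ' : ∑ i : Fin q, |β' i| ≤ 1 - ε)
    -- zero conventions for nonpositive times
    (hX0 : ∀ τ : ℤ, τ ≤ 0 → X τ = 0) (heps0 : ∀ τ : ℤ, τ ≤ 0 → eps τ = 0)
    -- the signal is generated by the ARMA(k,q) model with coefficients (α′,β′)
    (hARMA : ∀ t : ℤ, 1 ≤ t → ∀ ω,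
      X t ω = (∑ i : Fin k, α' i * X (t - (((i : ℕ) : ℤ) + 1)) ω)
        + (∑ i : Fin q, β' i * eps (t - (((i : ℕ) : ℤ) + 1)) ω) + eps t ω)
    -- noise first-moment bound
    (hepsbd : ∀ t : ℤ, 1 ≤ t → ∫ ω, |eps t ω| ∂μ ≤ Mmax)
    -- the loss functions, L-Lipschitz in the second argument
    (ℓ : ℤ → ℝ → ℝ → ℝ)
    (hLip : ∀ t : ℤ, ∀ x a b : ℝ, |ℓ t x a - ℓ t x b| ≤ L * |a - b|)
    -- the fixed-point predictor X_t^∞(α′,β′) and its decay bound for t = 1,…,q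
    (Xinf : ℤ → Ω → ℝ)
    (hXinf0 : ∀ τ : ℤ, τ ≤ 1 → Xinf τ = X τ)
    (hXinfrec : ∀ t : ℤ, 2 ≤ t → ∀ ω,
      Xinf t ω = (∑ i : Fin k, α' i * X (t - (((i : ℕ) : ℤ) + 1)) ω)
        + ∑ i : Fin q, β' i * (X (t - (((i : ℕ) : ℤ) + 1)) ω
            - Xinf (t - (((i : ℕ) : ℤ) + 1)) ω))
    (hdecay : ∀ t : ℤ, 1 ≤ t → t ≤ (q : ℤ) →
      ∫ ω, |X t ω - Xinf t ω - eps t ω| ∂μ ≤ ρ * (1 - ε) ^ ((t : ℝ) / (q : ℝ)))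
    -- all relevant expectations exist
    (hXint : ∀ t : ℤ, Integrable (X t) μ)
    (hepsint : ∀ t : ℤ, Integrable (eps t) μ)
    (hXinfint : ∀ t : ℤ, Integrable (Xinf t) μ)
    (hfinfint : ∀ t : ℤ, Integrable (fun ω => ℓ t (X t ω) (Xinf t ω)) μ)
    (hftint : ∀ t : ℤ, Integrable (fun ω =>
      ℓ t (X t ω) ((∑ i : Fin k, α' i * X (t - (((i : ℕ) : ℤ) + 1)) ω)
        + ∑ i : Fin q, β' i * eps (t - (((i : ℕ) : ℤ) + 1)) ω)) μ)
    (hℓmint : ∀ t : ℤ, ∀ γ : Fin (m + k) → ℝ, Integrable (fun ω =>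
      ℓ t (X t ω) (∑ i : Fin (m + k), γ i * X (t - (((i : ℕ) : ℤ) + 1)) ω)) μ)
    -- the online sequence and its pathwise AR regret bound
    (γseq : ℕ → Ω → (Fin (m + k) → ℝ))
    (halgint : ∀ t : ℕ, t ∈ Finset.Icc 1 T → Integrable (fun ω =>
      ℓ (t : ℤ) (X (t : ℤ) ω) (∑ i : Fin (m + k), γseq t ω i * X ((t : ℤ) - (((i : ℕ) : ℤ) + 1)) ω)) μ)
    (hregret : ∀ ω, ∀ γ : Fin (m + k) → ℝ,
      ∑ t ∈ Finset.Icc 1 T,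
          ℓ (t : ℤ) (X (t : ℤ) ω) (∑ i : Fin (m + k), γseq t ω i * X ((t : ℤ) - (((i : ℕ) : ℤ) + 1)) ω)
        ≤ (∑ t ∈ Finset.Icc 1 T,
            ℓ (t : ℤ) (X (t : ℤ) ω) (∑ i : Fin (m + k), γ i * X ((t : ℤ) - (((i : ℕ) : ℤ) + 1)) ω)) + R) :
    (∫ ω, ∑ t ∈ Finset.Icc 1 T,
        ℓ (t : ℤ) (X (t : ℤ) ω) (∑ i : Fin (m + k), γseq t ω i * X ((t : ℤ) - (((i : ℕ) : ℤ) + 1)) ω) ∂μ)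
      - ∑ t ∈ Finset.Icc 1 T, ∫ ω,
          ℓ (t : ℤ) (X (t : ℤ) ω) ((∑ i : Fin k, α' i * X ((t : ℤ) - (((i : ℕ) : ℤ) + 1)) ω)
            + ∑ i : Fin q, β' i * eps ((t : ℤ) - (((i : ℕ) : ℤ) + 1)) ω) ∂μ
      ≤ R + 2 * T * L * Mmax * (1 - ε) ^ ((m : ℝ) / (q : ℝ))
        + ρ * L * (1 - ε) ^ ((1 : ℝ) / (q : ℝ)) / (1 - (1 - ε) ^ ((1 : ℝ) / (q : ℝ))) := by
  have hM : (0:ℝ) < Mmax := lt_of_lt_of_le hρ0 hρ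
  have hb0 : (0:ℝ) < 1 - ε := by linarith
  have hL0 : (0:ℝ) ≤ L := by
    have h := hLip 0 0 1 0
    simp at h
    exact le_trans (abs_nonneg _) h
  have hkey := key_bound μ k q hq ε Mmax hε0 hε1 hM X eps α' β' hβ' hX0 heps0 hARMA
    hepsbd hXint hepsint
  -- the comparator
  set γs : Fin (m + k) → ℝ := fun i => arCoef α' β' m ((i:ℕ)+1) with hγs
  have hbridge : ∀ (t : ℤ) (ω : Ω),
      (∑ i : Fin (m + k), γs i * X (t - (((i:ℕ):ℤ)+1)) ω)
      = ∑ j ∈ Icc 1 (m + k), arCoef α' β' m j * X (t - (j:ℤ)) ω := by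
    intro t ω
    rw [Fin.sum_univ_eq_sum_range (fun i => arCoef α' β' m (i+1) * X (t - ((i:ℤ)+1)) ω)]
    refine Finset.sum_nbij' (fun i => i + 1) (fun j => j - 1) ?_ ?_ ?_ ?_ ?_
    · intro a ha; simp only [Finset.mem_range] at ha; simp only [Finset.mem_Icc]; omega
    · intro a ha; simp only [Finset.mem_Icc] at ha; simp only [Finset.mem_range]; omega
    · intro a ha; show a + 1 - 1 = a; omega
    · intro a ha; have h1 := (Finset.mem_Icc.mp ha).1; show a - 1 + 1 = a; omega
    · intro a ha
      have hc : ((a:ℤ) + 1) = (((a + 1 : ℕ)) : ℤ) := by push_cast; ring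
      show arCoef α' β' m (a + 1) * X (t - ((a:ℤ) + 1)) ω = _
      rw [hc]

  -- per-step comparison
  have hstep : ∀ t ∈ Finset.Icc 1 T,
      (∫ ω, ℓ (t : ℤ) (X (t : ℤ) ω)
          (∑ i : Fin (m + k), γs i * X ((t : ℤ) - (((i:ℕ):ℤ)+1)) ω) ∂μ)
      ≤ (∫ ω, ℓ (t : ℤ) (X (t : ℤ) ω)
          ((∑ i : Fin k, α' i * X ((t : ℤ) - (((i:ℕ):ℤ)+1)) ω)
            + ∑ i : Fin q, β' i * eps ((t : ℤ) - (((i:ℕ):ℤ)+1)) ω) ∂μ)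
        + L * (Mmax * (1 - ε) ^ ((m:ℝ)/(q:ℝ))) := by
    intro t htmem
    simp only [Finset.mem_Icc] at htmem
    have ht1 : (1:ℤ) ≤ (t:ℤ) := by exact_mod_cast htmem.1
    have hGint : Integrable (fun ω => Gfun α' β' X eps m (t:ℤ) ω) μ := by
      unfold Gfun
      exact ((hXint _).sub (hepsint _)).sub
        (integrable_finset_sum _ (fun i _ => ((hXint _).const_mul _)))
    have hptb : ∀ ω : Ω,
        ℓ (t : ℤ) (X (t : ℤ) ω) (∑ i : Fin (m + k), γs i * X ((t : ℤ) - (((i:ℕ):ℤ)+1)) ω)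
        - ℓ (t : ℤ) (X (t : ℤ) ω)
            ((∑ i : Fin k, α' i * X ((t : ℤ) - (((i:ℕ):ℤ)+1)) ω)
              + ∑ i : Fin q, β' i * eps ((t : ℤ) - (((i:ℕ):ℤ)+1)) ω)
        ≤ L * |Gfun α' β' X eps m (t:ℤ) ω| := by
      intro ω
      have harma : (∑ i : Fin k, α' i * X ((t : ℤ) - (((i:ℕ):ℤ)+1)) ω)
          + ∑ i : Fin q, β' i * eps ((t : ℤ) - (((i:ℕ):ℤ)+1)) ω
          = X (t:ℤ) ω - eps (t:ℤ) ω := by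
        have := hARMA (t:ℤ) ht1 ω
        linarith
      have hG : |(∑ i : Fin (m + k), γs i * X ((t : ℤ) - (((i:ℕ):ℤ)+1)) ω)
          - (X (t:ℤ) ω - eps (t:ℤ) ω)| = |Gfun α' β' X eps m (t:ℤ) ω| := by
        rw [hbridge (t:ℤ) ω]
        unfold Gfun
        rw [← abs_neg]
        congr 1
        ring
      calc _ ≤ |ℓ (t : ℤ) (X (t : ℤ) ω) (∑ i : Fin (m + k), γs i * X ((t : ℤ) - (((i:ℕ):ℤ)+1)) ω)
            - ℓ (t : ℤ) (X (t : ℤ) ω)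
              ((∑ i : Fin k, α' i * X ((t : ℤ) - (((i:ℕ):ℤ)+1)) ω)
                + ∑ i : Fin q, β' i * eps ((t : ℤ) - (((i:ℕ):ℤ)+1)) ω)| := le_abs_self _
        _ ≤ L * |(∑ i : Fin (m + k), γs i * X ((t : ℤ) - (((i:ℕ):ℤ)+1)) ω)
            - ((∑ i : Fin k, α' i * X ((t : ℤ) - (((i:ℕ):ℤ)+1)) ω)
              + ∑ i : Fin q, β' i * eps ((t : ℤ) - (((i:ℕ):ℤ)+1)) ω)| := hLip _ _ _ _
        _ = L * |Gfun α' β' X eps m (t:ℤ) ω| := by rw [harma, hG]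
    have hint1 := hℓmint (t:ℤ) γs
    have hint2 := hftint (t:ℤ)
    have hdiff : (∫ ω, ℓ (t : ℤ) (X (t : ℤ) ω)
          (∑ i : Fin (m + k), γs i * X ((t : ℤ) - (((i:ℕ):ℤ)+1)) ω) ∂μ)
        - (∫ ω, ℓ (t : ℤ) (X (t : ℤ) ω)
          ((∑ i : Fin k, α' i * X ((t : ℤ) - (((i:ℕ):ℤ)+1)) ω)
            + ∑ i : Fin q, β' i * eps ((t : ℤ) - (((i:ℕ):ℤ)+1)) ω) ∂μ)
        ≤ L * (Mmax * (1 - ε) ^ ((m:ℝ)/(q:ℝ))) := by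
      rw [← integral_sub hint1 hint2]
      calc (∫ ω, (ℓ (t : ℤ) (X (t : ℤ) ω)
            (∑ i : Fin (m + k), γs i * X ((t : ℤ) - (((i:ℕ):ℤ)+1)) ω)
          - ℓ (t : ℤ) (X (t : ℤ) ω)
            ((∑ i : Fin k, α' i * X ((t : ℤ) - (((i:ℕ):ℤ)+1)) ω)
              + ∑ i : Fin q, β' i * eps ((t : ℤ) - (((i:ℕ):ℤ)+1)) ω)) ∂μ)
          ≤ ∫ ω, L * |Gfun α' β' X eps m (t:ℤ) ω| ∂μ := by
            apply integral_mono (hint1.sub hint2) (hGint.abs.const_mul L)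
            intro ω
            exact hptb ω
        _ = L * ∫ ω, |Gfun α' β' X eps m (t:ℤ) ω| ∂μ := integral_const_mul _ _
        _ ≤ L * (Mmax * (1 - ε) ^ ((m:ℝ)/(q:ℝ))) :=
            mul_le_mul_of_nonneg_left (hkey m (t:ℤ)) hL0
    linarith
  -- assembly
  have hint_alg : Integrable (fun ω => ∑ t ∈ Finset.Icc 1 T,
      ℓ (t : ℤ) (X (t : ℤ) ω)
        (∑ i : Fin (m + k), γseq t ω i * X ((t : ℤ) - (((i:ℕ):ℤ)+1)) ω)) μ :=
    integrable_finset_sum _ (fun t htm => halgint t htm)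
  have hint_comp : Integrable (fun ω => ∑ t ∈ Finset.Icc 1 T,
      ℓ (t : ℤ) (X (t : ℤ) ω)
        (∑ i : Fin (m + k), γs i * X ((t : ℤ) - (((i:ℕ):ℤ)+1)) ω)) μ :=
    integrable_finset_sum _ (fun t _ => hℓmint (t:ℤ) γs)
  have hstep1 : (∫ ω, ∑ t ∈ Finset.Icc 1 T,
        ℓ (t : ℤ) (X (t : ℤ) ω)
          (∑ i : Fin (m + k), γseq t ω i * X ((t : ℤ) - (((i:ℕ):ℤ)+1)) ω) ∂μ)
      ≤ (∑ t ∈ Finset.Icc 1 T, ∫ ω, ℓ (t : ℤ) (X (t : ℤ) ω)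
          (∑ i : Fin (m + k), γs i * X ((t : ℤ) - (((i:ℕ):ℤ)+1)) ω) ∂μ) + R := by
    have h1 : (∫ ω, ∑ t ∈ Finset.Icc 1 T,
        ℓ (t : ℤ) (X (t : ℤ) ω)
          (∑ i : Fin (m + k), γseq t ω i * X ((t : ℤ) - (((i:ℕ):ℤ)+1)) ω) ∂μ)
        ≤ ∫ ω, ((∑ t ∈ Finset.Icc 1 T,
            ℓ (t : ℤ) (X (t : ℤ) ω)
              (∑ i : Fin (m + k), γs i * X ((t : ℤ) - (((i:ℕ):ℤ)+1)) ω)) + R) ∂μ := by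
      apply integral_mono hint_alg (hint_comp.add (integrable_const R))
      intro ω
      exact hregret ω γs
    rw [integral_add hint_comp (integrable_const R), integral_const,
      MeasureTheory.integral_finset_sum (Finset.Icc 1 T)
        (fun (t : ℕ) (_ : t ∈ Finset.Icc 1 T) => hℓmint ((t:ℕ):ℤ) γs)] at h1
    simpa using h1
  have hstep2 : (∑ t ∈ Finset.Icc 1 T, ∫ ω, ℓ (t : ℤ) (X (t : ℤ) ω)
        (∑ i : Fin (m + k), γs i * X ((t : ℤ) - (((i:ℕ):ℤ)+1)) ω) ∂μ)
      ≤ (∑ t ∈ Finset.Icc 1 T, ∫ ω,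
          ℓ (t : ℤ) (X (t : ℤ) ω) ((∑ i : Fin k, α' i * X ((t : ℤ) - (((i:ℕ):ℤ)+1)) ω)
            + ∑ i : Fin q, β' i * eps ((t : ℤ) - (((i:ℕ):ℤ)+1)) ω) ∂μ)
        + (T:ℝ) * (L * (Mmax * (1 - ε) ^ ((m:ℝ)/(q:ℝ)))) := by
    calc _ ≤ ∑ t ∈ Finset.Icc 1 T, ((∫ ω,
          ℓ (t : ℤ) (X (t : ℤ) ω) ((∑ i : Fin k, α' i * X ((t : ℤ) - (((i:ℕ):ℤ)+1)) ω)
            + ∑ i : Fin q, β' i * eps ((t : ℤ) - (((i:ℕ):ℤ)+1)) ω) ∂μ)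
          + L * (Mmax * (1 - ε) ^ ((m:ℝ)/(q:ℝ)))) := Finset.sum_le_sum hstep
      _ = _ := by
          rw [Finset.sum_add_distrib, Finset.sum_const, Nat.card_Icc]
          simp only [nsmul_eq_mul]
          norm_num
  -- final numeric comparison
  have hv1 : (1 - ε) ^ ((1:ℝ)/(q:ℝ)) < 1 := by
    apply Real.rpow_lt_one hb0.le (by linarith)
    positivity
  have hv0 : (0:ℝ) < (1 - ε) ^ ((1:ℝ)/(q:ℝ)) := Real.rpow_pos_of_pos hb0 _
  have hu0 : (0:ℝ) < (1 - ε) ^ ((m:ℝ)/(q:ℝ)) := Real.rpow_pos_of_pos hb0 _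
  have hthird : (0:ℝ) ≤ ρ * L * (1 - ε) ^ ((1:ℝ)/(q:ℝ)) / (1 - (1 - ε) ^ ((1:ℝ)/(q:ℝ))) := by
    apply div_nonneg _ (by linarith)
    positivity
  have hTpos : (0:ℝ) ≤ (T:ℝ) := by positivity
  have hterm : (0:ℝ) ≤ (T:ℝ) * (L * (Mmax * (1 - ε) ^ ((m:ℝ)/(q:ℝ)))) := by positivity
  have := le_trans hstep1 (by linarith : (∑ t ∈ Finset.Icc 1 T, ∫ ω, ℓ (t : ℤ) (X (t : ℤ) ω)
        (∑ i : Fin (m + k), γs i * X ((t : ℤ) - (((i:ℕ):ℤ)+1)) ω) ∂μ) + R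
      ≤ ((∑ t ∈ Finset.Icc 1 T, ∫ ω,
          ℓ (t : ℤ) (X (t : ℤ) ω) ((∑ i : Fin k, α' i * X ((t : ℤ) - (((i:ℕ):ℤ)+1)) ω)
            + ∑ i : Fin q, β' i * eps ((t : ℤ) - (((i:ℕ):ℤ)+1)) ω) ∂μ)
        + (T:ℝ) * (L * (Mmax * (1 - ε) ^ ((m:ℝ)/(q:ℝ))))) + R)
  have h2T : (T:ℝ) * (L * (Mmax * (1 - ε) ^ ((m:ℝ)/(q:ℝ))))
      ≤ 2 * (T:ℝ) * L * Mmax * (1 - ε) ^ ((m:ℝ)/(q:ℝ)) := by nlinarith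
  linarith
end
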